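/- Let (B, Θ) be a category with a structure of nullhomotopies satisfying the reduced interchange condition, with a Θ-strong zero object, strong Θ-kernels of all arrows, strong Θ-cokernels of all terminal arrows, and pullbacks. Let S be a class of arrows of B closed under composition, stable under pullbacks, containing all identities, satisfying left cancellation (if f·g ∈ S then g ∈ S), and satisfying condition (Sub). If, for an arrow g : X → Y with Θ-kernel (N(g), n_g, ν_g), the object X is S-proper and N(g) is S-global, then the snail sequence N(0_{N(g)}) → N(0_X) → N(0_Y) → π₀(N(g)) → π₀(X) → π₀(Y) is S-exact at π₀(N(g)). -/

import Mathlib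

open CategoryTheory CategoryTheory.Limits

noncomputable section

universe v u

/-- A structure of nullhomotopies `Θ` on a category `B` (Grandis).  We encode the family of
sets `Θ(g)`, for `g : X ⟶ Y`, as a total space `H X Y` together with a projection `ar`
assigning to every nullhomotopy the arrow on which it lives; thus `Θ(g) = {φ : H X Y // ar φ = g}`.
The maps `f ∘ - ∘ h : Θ(g) → Θ(f·g·h)` are encoded by `act`. -/
structure NullStruct (B : Type u) [Category.{v} B] where
  H : B → B → Type v
  ar : ∀ {X Y : B}, H X Y → (X ⟶ Y)
  act : ∀ {A X Y D : B}, (A ⟶ X) → H X Y → (Y ⟶ D) → H A D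
  ar_act : ∀ {A X Y D : B} (f : A ⟶ X) (φ : H X Y) (h : Y ⟶ D),
      ar (act f φ h) = f ≫ ar φ ≫ h
  act_id : ∀ {X Y : B} (φ : H X Y), act (𝟙 X) φ (𝟙 Y) = φ
  act_comp : ∀ {A' A X Y D D' : B} (f' : A' ⟶ A) (f : A ⟶ X) (φ : H X Y)
      (h : Y ⟶ D) (h' : D ⟶ D'),
      act (f' ≫ f) φ (h ≫ h') = act f' (act f φ h) h'

namespace NullStruct

variable {B : Type u} [Category.{v} B]

/-- The reduced interchange condition: `α ∘ g = f ∘ β` for `α ∈ Θ(f)`, `β ∈ Θ(g)`. -/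
def ReducedInterchange (Θ : NullStruct B) : Prop :=
  ∀ {A X Y : B} (f : A ⟶ X) (g : X ⟶ Y) (α : Θ.H A X) (β : Θ.H X Y),
    Θ.ar α = f → Θ.ar β = g → Θ.act (𝟙 A) α g = Θ.act f β (𝟙 Y)

/-- `(N, n, ν)` is a Θ-kernel of `g`. -/
structure IsKer (Θ : NullStruct B) {N X Y : B} (g : X ⟶ Y) (n : N ⟶ X) (ν : Θ.H N Y) : Prop where
  ar_eq : Θ.ar ν = n ≫ g
  lift : ∀ {A : B} (f : A ⟶ X) (φ : Θ.H A Y), Θ.ar φ = f ≫ g →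
    ∃! f' : A ⟶ N, f' ≫ n = f ∧ Θ.act f' ν (𝟙 Y) = φ

/-- `(N, n, ν)` is a strong Θ-kernel of `g`. -/
structure IsStrongKer (Θ : NullStruct B) {N X Y : B} (g : X ⟶ Y) (n : N ⟶ X) (ν : Θ.H N Y)
    extends NullStruct.IsKer Θ g n ν : Prop where
  liftH : ∀ {A : B} (f : A ⟶ N) (φ : Θ.H A X), Θ.ar φ = f ≫ n →
    Θ.act (𝟙 A) φ g = Θ.act f ν (𝟙 Y) →
    ∃! φ' : Θ.H A N, Θ.ar φ' = f ∧ Θ.act (𝟙 A) φ' n = φ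

/-- `(Q, c, γ)` is a Θ-cokernel of `g`. -/
structure IsCoker (Θ : NullStruct B) {X Y Q : B} (g : X ⟶ Y) (c : Y ⟶ Q) (γ : Θ.H X Q) : Prop where
  ar_eq : Θ.ar γ = g ≫ c
  desc : ∀ {D : B} (f : Y ⟶ D) (φ : Θ.H X D), Θ.ar φ = g ≫ f →
    ∃! f' : Q ⟶ D, c ≫ f' = f ∧ Θ.act (𝟙 X) γ f' = φ

/-- `(Q, c, γ)` is a strong Θ-cokernel of `g`. -/
structure IsStrongCoker (Θ : NullStruct B) {X Y Q : B} (g : X ⟶ Y) (c : Y ⟶ Q) (γ : Θ.H X Q)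
    extends NullStruct.IsCoker Θ g c γ : Prop where
  descH : ∀ {D : B} (f : Q ⟶ D) (φ : Θ.H Y D), Θ.ar φ = c ≫ f →
    Θ.act g φ (𝟙 D) = Θ.act (𝟙 X) γ f →
    ∃! φ' : Θ.H Q D, Θ.ar φ' = f ∧ Θ.act c φ' (𝟙 D) = φ

/-- A Θ-strong zero object: a zero object `Z` such that, for every `X`, the sets of
nullhomotopies `Θ(X ⟶ Z)` and `Θ(Z ⟶ X)` are singletons. -/
structure StrongZero (Θ : NullStruct B) where
  Z : B
  isZero : IsZero Z
  toZ : ∀ X : B, Θ.H X Z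
  toZ_uniq : ∀ (X : B) (φ : Θ.H X Z), φ = toZ X
  fromZ : ∀ X : B, Θ.H Z X
  fromZ_uniq : ∀ (X : B) (φ : Θ.H Z X), φ = fromZ X

/-- The zero arrow `X ⟶ Z ⟶ Y` through the Θ-strong zero object. -/
def StrongZero.zero {Θ : NullStruct B} (ζ : Θ.StrongZero) (X Y : B) : X ⟶ Y :=
  ζ.isZero.from_ X ≫ ζ.isZero.to_ Y

/-- The canonical nullhomotopy `*` on the zero arrow `X ⟶ Z ⟶ Y`. -/
def StrongZero.star {Θ : NullStruct B} (ζ : Θ.StrongZero) (X Y : B) : Θ.H X Y :=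
  Θ.act (𝟙 X) (ζ.toZ X) (ζ.isZero.to_ Y)

/-- An object `Y` is discrete: every nullhomotopy with codomain `Y` lives on the zero arrow
and is the canonical one (i.e. `Θ(g) = ∅` if `g ≠ 0`, and `Θ(0) = {*}`). -/
def IsDiscrete {Θ : NullStruct B} (ζ : Θ.StrongZero) (Y : B) : Prop :=
  ∀ (X : B) (φ : Θ.H X Y), Θ.ar φ = ζ.zero X Y ∧ φ = ζ.star X Y

/-- Codiscrete objects: dual of discrete. -/
def IsCodiscrete {Θ : NullStruct B} (ζ : Θ.StrongZero) (X : B) : Prop :=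
  ∀ (Y : B) (φ : Θ.H X Y), Θ.ar φ = ζ.zero X Y ∧ φ = ζ.star X Y

/-- `k` is a categorical kernel of `g` (with respect to the zero arrows through the
Θ-strong zero object). -/
def IsCatKer {Θ : NullStruct B} (ζ : Θ.StrongZero) {K X Y : B} (k : K ⟶ X) (g : X ⟶ Y) : Prop :=
  k ≫ g = ζ.zero K Y ∧
  ∀ {W : B} (w : W ⟶ X), w ≫ g = ζ.zero W Y → ∃! w' : W ⟶ K, w' ≫ k = w

/-- `(f, φ, g)` is S-exact: any factorization of `(f, φ)` through a Θ-kernel of `g`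
belongs to `S`. -/
def SExact (Θ : NullStruct B) (S : ∀ ⦃X Y : B⦄, (X ⟶ Y) → Prop)
    {W X Y : B} (f : W ⟶ X) (φ : Θ.H W Y) (g : X ⟶ Y) : Prop :=
  ∀ {N : B} (n : N ⟶ X) (ν : Θ.H N Y), Θ.IsKer g n ν →
    ∀ (w : W ⟶ N), w ≫ n = f → Θ.act w ν (𝟙 Y) = φ → S w

/-- `Y` is S-proper relative to the canonical arrow `η : Y ⟶ π₀(Y)`: the canonical
comparison `N(id_Y) ⟶ N(η_Y)` belongs to `S`. -/
def SProper (Θ : NullStruct B) (S : ∀ ⦃X Y : B⦄, (X ⟶ Y) → Prop)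
    {Y P : B} (η : Y ⟶ P) : Prop :=
  ∀ {NI : B} (nI : NI ⟶ Y) (νI : Θ.H NI Y), Θ.IsKer (𝟙 Y) nI νI →
  ∀ {NE : B} (nE : NE ⟶ Y) (νE : Θ.H NE P), Θ.IsKer η nE νE →
  ∀ (w : NI ⟶ NE), w ≫ nE = nI → Θ.act w νE (𝟙 P) = Θ.act (𝟙 NI) νI η → S w

/-- Condition (Sub) on a class `S` of arrows. -/
def CondSub {Θ : NullStruct B} (ζ : Θ.StrongZero) (S : ∀ ⦃X Y : B⦄, (X ⟶ Y) → Prop) : Prop :=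
  ∀ ⦃X Y X₀ Y₀ : B⦄ (g : X ⟶ Y) (g₀ : X₀ ⟶ Y₀) (x : X ⟶ X₀) (y : Y ⟶ Y₀),
    g ≫ y = x ≫ g₀ →
    ∀ ⦃Kg Kg₀ Kx Ky : B⦄ (kg : Kg ⟶ X) (kg₀ : Kg₀ ⟶ X₀) (kx : Kx ⟶ X) (ky : Ky ⟶ Y),
      IsCatKer ζ kg g → IsCatKer ζ kg₀ g₀ → IsCatKer ζ kx x → IsCatKer ζ ky y →
      ∀ (u : Kg ⟶ Kg₀) (v : Kx ⟶ Ky),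
        u ≫ kg₀ = kg ≫ x → v ≫ ky = kx ≫ g → S g → S u → S v

end NullStruct

open NullStruct

/-!
Since `π₀`-objects are discrete, Θ-kernels of `η_{N(g)}`, `η_X` and `π₀(n_g)` are categorical
kernels, and so is the connecting arrow `Δ : N(0_Y) ⟶ N(g)` for `n_g`. Condition (Sub), applied to
the naturality square `η_{N(g)} ≫ π₀(n_g) = n_g ≫ η_X`, thus reduces exactness at `π₀(N(g))` to
`η_{N(g)} ∈ S` (globality of `N(g)`) and to the induced arrow `u : N(η_{N(g)}) ⟶ N(η_X)` being
in `S`. For the latter, the arrow `t : N(id_{N(g)}) ⟶ N(id_X)` induced by `n_g` is split epi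
because `n_g` is a strong Θ-kernel, the comparison `s : N(id_X) ⟶ N(η_X)` is in `S` by properness
of `X`, and `t ≫ s` factors as `N(id_{N(g)}) ⟶ N(η_{N(g)}) ⟶ N(η_X)` through `u`, so left
cancellation applies.
-/

namespace NullStruct

variable {B : Type u} [Category.{v} B] {Θ : NullStruct B}

lemma act_comp_left {A' A X Y : B} (f' : A' ⟶ A) (f : A ⟶ X) (φ : Θ.H X Y) :
    Θ.act (f' ≫ f) φ (𝟙 Y) = Θ.act f' (Θ.act f φ (𝟙 Y)) (𝟙 Y) := by
  rw [← Θ.act_comp, Category.comp_id]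

lemma act_act_comm {A X Y D : B} (f : A ⟶ X) (φ : Θ.H X Y) (h : Y ⟶ D) :
    Θ.act f (Θ.act (𝟙 X) φ h) (𝟙 D) = Θ.act (𝟙 A) (Θ.act f φ (𝟙 Y)) h := by
  rw [← Θ.act_comp, ← Θ.act_comp, Category.comp_id, Category.comp_id, Category.id_comp,
    Category.id_comp]

namespace StrongZero

variable (ζ : Θ.StrongZero)

lemma zero_comp {A X Y : B} (h : X ⟶ Y) : ζ.zero A X ≫ h = ζ.zero A Y := by
  rw [zero, zero, Category.assoc, ζ.isZero.eq_of_src (ζ.isZero.to_ X ≫ h)]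

lemma comp_zero {A X Y : B} (f : A ⟶ X) : f ≫ ζ.zero X Y = ζ.zero A Y := by
  rw [zero, zero, ← Category.assoc, ζ.isZero.eq_of_tgt (f ≫ ζ.isZero.from_ X)]

lemma ar_star (A Y : B) : Θ.ar (ζ.star A Y) = ζ.zero A Y := by
  rw [star, ar_act, Category.id_comp, zero, ζ.isZero.eq_of_tgt (Θ.ar (ζ.toZ A))]

end StrongZero

lemma IsKer.hom_ext {N X Y : B} {g : X ⟶ Y} {n : N ⟶ X} {ν : Θ.H N Y}
    (hk : Θ.IsKer g n ν) {A : B} {a b : A ⟶ N}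
    (hn : a ≫ n = b ≫ n) (hν : Θ.act a ν (𝟙 Y) = Θ.act b ν (𝟙 Y)) : a = b := by
  obtain ⟨_, -, huniq⟩ := hk.lift (b ≫ n) (Θ.act b ν (𝟙 Y))
    (by rw [Θ.ar_act, hk.ar_eq, Category.comp_id, Category.assoc])
  exact (huniq a ⟨hn, hν⟩).trans (huniq b ⟨rfl, rfl⟩).symm

lemma IsCatKer.hom_ext {ζ : Θ.StrongZero} {K X Y : B} {k : K ⟶ X} {g : X ⟶ Y}
    (hk : IsCatKer ζ k g) {W : B} {a b : W ⟶ K} (hab : a ≫ k = b ≫ k) : a = b := by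
  obtain ⟨_, -, huniq⟩ := hk.2 (b ≫ k) (by rw [Category.assoc, hk.1, ζ.comp_zero])
  exact (huniq a hab).trans (huniq b rfl).symm

lemma comp_eq_zero_of_isDiscrete {ζ : Θ.StrongZero} {A X P : B} (φ : Θ.H A X) (e : X ⟶ P)
    (hP : IsDiscrete ζ P) : Θ.ar φ ≫ e = ζ.zero A P := by
  rw [← (hP A (Θ.act (𝟙 A) φ e)).1, ar_act, Category.id_comp]

lemma IsKer.isCatKer_of_isDiscrete {ζ : Θ.StrongZero} {N X Y : B} {g : X ⟶ Y} {n : N ⟶ X}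
    {ν : Θ.H N Y} (hk : Θ.IsKer g n ν) (hY : IsDiscrete ζ Y) : IsCatKer ζ n g := by
  refine ⟨hk.ar_eq ▸ (hY N ν).1, fun w hw => ?_⟩
  obtain ⟨w', hw', huniq⟩ := hk.lift w (ζ.star _ Y) (by rw [ζ.ar_star, hw])
  exact ⟨w', hw'.1, fun y hy => huniq y ⟨hy, (hY _ _).2⟩⟩

lemma IsStrongKer.isDiscrete {ζ : Θ.StrongZero} (hRI : Θ.ReducedInterchange)
    {C P : B} {c : ζ.Z ⟶ C} {p : P ⟶ ζ.Z} {μ : Θ.H P C}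
    (hp : Θ.IsStrongKer c p μ) : IsDiscrete ζ P := by
  intro A φ
  -- by reduced interchange, `ψ ∘ (p ≫ c) = k ∘ μ`, and `ψ ∘ p` is the unique element of `Θ(A ⟶ Z)`
  have act_μ_eq : ∀ (k : A ⟶ P) (ψ : Θ.H A P), Θ.ar ψ = k →
      Θ.act k μ (𝟙 C) = Θ.act (𝟙 A) (ζ.toZ A) c := fun k ψ hψ => by
    rw [← hRI k (p ≫ c) ψ μ hψ hp.ar_eq, ← ζ.toZ_uniq A (Θ.act (𝟙 A) ψ p), ← Θ.act_comp,
      Category.comp_id]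
  have act_star := act_μ_eq _ _ (ζ.ar_star A P)
  have ar_φ : Θ.ar φ = ζ.zero A P :=
    hp.hom_ext (ζ.isZero.eq_of_tgt _ _) ((act_μ_eq _ φ rfl).trans act_star.symm)
  obtain ⟨_, -, huniq⟩ := hp.liftH (ζ.zero A P) (ζ.toZ A) (ζ.isZero.eq_of_tgt _ _) act_star.symm
  exact ⟨ar_φ, (huniq φ ⟨ar_φ, ζ.toZ_uniq A _⟩).trans
    (huniq (ζ.star A P) ⟨ζ.ar_star A P, ζ.toZ_uniq A _⟩).symm⟩

/-- `N(0_Y) ⟶ N(g)` is a categorical kernel of `n_g`. -/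
lemma IsKer.isCatKer_of_isKer_from_zero {ζ : Θ.StrongZero} {X Y Ng KY : B} {g : X ⟶ Y}
    {ng : Ng ⟶ X} {νg : Θ.H Ng Y} (hg : Θ.IsKer g ng νg)
    {kY : KY ⟶ ζ.Z} {νY : Θ.H KY Y} (hkY : Θ.IsKer (ζ.isZero.to_ Y) kY νY)
    {Δ : KY ⟶ Ng} (hΔ₀ : Δ ≫ ng = ζ.zero KY X) (hΔ : Θ.act Δ νg (𝟙 Y) = νY) :
    IsCatKer ζ Δ ng := by
  refine ⟨hΔ₀, fun t ht => ?_⟩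
  have ar_t : Θ.ar (Θ.act t νg (𝟙 Y)) = ζ.isZero.from_ _ ≫ ζ.isZero.to_ Y := by
    rw [Θ.ar_act, hg.ar_eq, Category.comp_id, ← Category.assoc, ht, ζ.zero_comp]
    rfl
  obtain ⟨t', ⟨-, ht'⟩, -⟩ := hkY.lift _ _ ar_t
  refine ⟨t', hg.hom_ext ?_ ?_, fun s hs => hkY.hom_ext (ζ.isZero.eq_of_tgt _ _) ?_⟩
  · rw [Category.assoc, hΔ₀, ζ.comp_zero, ht]
  · rw [act_comp_left, hΔ, ht']
  · rw [ht', ← hs, act_comp_left, hΔ]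

lemma IsKer.eta_naturality {ζ : Θ.StrongZero} {Ng X CN CX PN PX : B} {ng : Ng ⟶ X}
    {γN : Θ.H Ng CN} {γX : Θ.H X CX} {pX : PX ⟶ ζ.Z} {cX : ζ.Z ⟶ CX} {μN : Θ.H PN CN}
    {μX : Θ.H PX CX} (hpX : Θ.IsKer cX pX μX) {ηN : Ng ⟶ PN} {ηX : X ⟶ PX}
    (hηN : Θ.act ηN μN (𝟙 CN) = γN) (hηX : Θ.act ηX μX (𝟙 CX) = γX)
    {cng : CN ⟶ CX} (hcng : Θ.act (𝟙 Ng) γN cng = Θ.act ng γX (𝟙 CX))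
    {png : PN ⟶ PX} (hpng : Θ.act png μX (𝟙 CX) = Θ.act (𝟙 PN) μN cng) :
    ηN ≫ png = ng ≫ ηX := by
  refine hpX.hom_ext (ζ.isZero.eq_of_tgt _ _) ?_
  rw [act_comp_left, act_comp_left, hpng, act_act_comm, hηN, hcng, hηX]

lemma IsStrongKer.exists_section_kerIdMap {X Y Ng NI NIN : B} {g : X ⟶ Y} {ng : Ng ⟶ X}
    {νg : Θ.H Ng Y} (hg : Θ.IsStrongKer g ng νg)
    {nI : NI ⟶ X} {νI : Θ.H NI X} (hI : Θ.IsKer (𝟙 X) nI νI)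
    {nIN : NIN ⟶ Ng} {νIN : Θ.H NIN Ng} (hIN : Θ.IsKer (𝟙 Ng) nIN νIN)
    {t : NIN ⟶ NI} (ht₁ : t ≫ nI = nIN ≫ ng) (ht₂ : Θ.act t νI (𝟙 X) = Θ.act (𝟙 NIN) νIN ng) :
    ∃ r : NI ⟶ NIN, r ≫ t = 𝟙 NI := by
  -- `νI ∘ g` lifts `nI` to `f : NI ⟶ N(g)`, and strongness lifts `νI` itself to `φ ∈ Θ(f)`
  obtain ⟨f, ⟨hf₁, hf₂⟩, -⟩ := hg.lift nI (Θ.act (𝟙 NI) νI g)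
    (by rw [Θ.ar_act, hI.ar_eq, Category.id_comp, Category.comp_id])
  obtain ⟨φ, ⟨hφ₁, hφ₂⟩, -⟩ := hg.liftH f νI (by rw [hI.ar_eq, hf₁, Category.comp_id]) hf₂.symm
  obtain ⟨r, ⟨hr₁, hr₂⟩, -⟩ := hIN.lift f φ (by rw [hφ₁, Category.comp_id])
  refine ⟨r, hI.hom_ext ?_ ?_⟩
  · rw [Category.assoc, ht₁, ← Category.assoc, hr₁, hf₁, Category.id_comp]
  · rw [act_comp_left, ht₂, act_act_comm, hr₂, hφ₂, Θ.act_id]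

lemma S_kerMap_of_sProper {ζ : Θ.StrongZero}
    (hK : ∀ (X Y : B) (g : X ⟶ Y), ∃ (N : B) (n : N ⟶ X) (ν : Θ.H N Y), Θ.IsStrongKer g n ν)
    {S : ∀ ⦃X Y : B⦄, (X ⟶ Y) → Prop}
    (hS_comp : ∀ {X Y Z : B} (u : X ⟶ Y) (v : Y ⟶ Z), S u → S v → S (u ≫ v))
    (hS_id : ∀ X : B, S (𝟙 X))
    (hS_cancel : ∀ {X Y Z : B} (u : X ⟶ Y) (v : Y ⟶ Z), S (u ≫ v) → S v)
    {X Y Ng PN PX NN NE : B} {g : X ⟶ Y} {ng : Ng ⟶ X} {νg : Θ.H Ng Y}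
    (hg : Θ.IsStrongKer g ng νg) {ηN : Ng ⟶ PN} {ηX : X ⟶ PX}
    (hX_proper : SProper Θ S ηX) (hPN : IsDiscrete ζ PN) (hPX : IsDiscrete ζ PX)
    {nN : NN ⟶ Ng} (hN : IsCatKer ζ nN ηN) {nE : NE ⟶ X} {νE : Θ.H NE PX}
    (hE : Θ.IsKer ηX nE νE) {u : NN ⟶ NE} (hu : u ≫ nE = nN ≫ ng) : S u := by
  obtain ⟨NI, nI, νI, hI⟩ := hK X X (𝟙 X)
  obtain ⟨NIN, nIN, νIN, hIN⟩ := hK Ng Ng (𝟙 Ng)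
  obtain ⟨t, ⟨ht₁, ht₂⟩, -⟩ := hI.lift (nIN ≫ ng) (Θ.act (𝟙 NIN) νIN ng)
    (by rw [Θ.ar_act, hIN.ar_eq, Category.id_comp, Category.comp_id, Category.comp_id])
  obtain ⟨r, hr⟩ := hg.exists_section_kerIdMap hI.toIsKer hIN.toIsKer ht₁ ht₂
  have hSt : S t := hS_cancel r t (hr ▸ hS_id NI)
  obtain ⟨s, ⟨hs₁, hs₂⟩, -⟩ := hE.lift nI (Θ.act (𝟙 NI) νI ηX)
    (by rw [Θ.ar_act, hI.ar_eq, Category.id_comp, Category.comp_id])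
  have hSs : S s := hX_proper nI νI hI.toIsKer nE νE hE s hs₁ hs₂
  obtain ⟨sN, hsN, -⟩ := hN.2 nIN
    (by simpa only [hIN.ar_eq, Category.comp_id] using comp_eq_zero_of_isDiscrete νIN ηN hPN)
  have hfactor : sN ≫ u = t ≫ s := (hE.isCatKer_of_isDiscrete hPX).hom_ext (by
    rw [Category.assoc, hu, ← Category.assoc, hsN, Category.assoc, hs₁, ht₁])
  exact hS_cancel sN u (hfactor ▸ hS_comp t s hSt hSs)

end NullStruct

theorem snail_sequence_S_exact_at_pi0_Ng_general
    {B : Type u} [Category.{v} B] (Θ : NullStruct B)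
    (hRI : Θ.ReducedInterchange) (ζ : Θ.StrongZero)
    (hK : ∀ (X Y : B) (g : X ⟶ Y), ∃ (N : B) (n : N ⟶ X) (ν : Θ.H N Y), Θ.IsStrongKer g n ν)
    -- the class `S` of arrows
    (S : ∀ ⦃X Y : B⦄, (X ⟶ Y) → Prop)
    (hS_comp : ∀ {X Y Z : B} (u : X ⟶ Y) (v : Y ⟶ Z), S u → S v → S (u ≫ v))
    (hS_id : ∀ X : B, S (𝟙 X))
    (hS_cancel : ∀ {X Y Z : B} (u : X ⟶ Y) (v : Y ⟶ Z), S (u ≫ v) → S v)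
    (hS_sub : CondSub ζ S)
    -- the arrow `g` and its strong Θ-kernel
    {X Y : B} (g : X ⟶ Y)
    {Ng : B} (ng : Ng ⟶ X) (νg : Θ.H Ng Y) (hg : Θ.IsStrongKer g ng νg)
    -- strong Θ-kernels of the initial arrows of `N(g)`, `X`, `Y`
    {KY : B} (kY : KY ⟶ ζ.Z) (νY : Θ.H KY Y) (hkY : Θ.IsStrongKer (ζ.isZero.to_ Y) kY νY)
    -- `π₀`-data of `N(g)`, `X`, `Y`
    {CN : B} (cN : ζ.Z ⟶ CN) (γN : Θ.H Ng CN)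
    {PN : B} (pN : PN ⟶ ζ.Z) (μN : Θ.H PN CN) (hpN : Θ.IsStrongKer cN pN μN)
    (ηN : Ng ⟶ PN) (hηN : Θ.act ηN μN (𝟙 CN) = γN)
    {CX : B} (cX : ζ.Z ⟶ CX) (γX : Θ.H X CX)
    {PX : B} (pX : PX ⟶ ζ.Z) (μX : Θ.H PX CX) (hpX : Θ.IsStrongKer cX pX μX)
    (ηX : X ⟶ PX) (hηX : Θ.act ηX μX (𝟙 CX) = γX)
    -- the arrows of the snail sequence
    (Δ : KY ⟶ Ng) (hΔ₀ : Δ ≫ ng = ζ.zero KY X) (hΔ : Θ.act Δ νg (𝟙 Y) = νY)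
    (cng : CN ⟶ CX)
    (hcng : Θ.act (𝟙 Ng) γN cng = Θ.act ng γX (𝟙 CX))
    (png : PN ⟶ PX)
    (hpng : Θ.act png μX (𝟙 CX) = Θ.act (𝟙 PN) μN cng)
    -- `X` is S-proper, `N(g)` is S-global
    (hX_proper : SProper Θ S ηX) (hNg_global : S ηN) :
    SExact Θ S (Δ ≫ ηN) (ζ.star KY PX) png := by
  have hPN : IsDiscrete ζ PN := hpN.isDiscrete hRI
  have hPX : IsDiscrete ζ PX := hpX.isDiscrete hRI
  have square : ηN ≫ png = ng ≫ ηX := hpX.eta_naturality hηN hηX hcng hpng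
  intro M m μM hM w hwm _
  obtain ⟨NN, nN, νN, hN⟩ := hK Ng PN ηN
  obtain ⟨NE, nE, νE, hE⟩ := hK X PX ηX
  have hNcat := hN.isCatKer_of_isDiscrete hPN
  have hEcat := hE.isCatKer_of_isDiscrete hPX
  obtain ⟨u, hu, -⟩ := hEcat.2 (nN ≫ ng)
    (by rw [Category.assoc, ← square, ← Category.assoc, hNcat.1, ζ.zero_comp])
  have hSu : S u :=
    S_kerMap_of_sProper hK hS_comp hS_id hS_cancel hg hX_proper hPN hPX hNcat hE.toIsKer hu
  exact hS_sub ηN ηX ng png square nN nE Δ m hNcat hEcat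
    (hg.isCatKer_of_isKer_from_zero hkY.toIsKer hΔ₀ hΔ) (hM.isCatKer_of_isDiscrete hPX)
    u w hu hwm hNg_global hSu

/-- Exactness of the snail sequence at `π₀(N(g))`.
Let `(B, Θ)` satisfy the reduced interchange condition, with a Θ-strong zero object `ζ`,
strong Θ-kernels of all arrows, strong Θ-cokernels of all terminal arrows, and pullbacks.
Let `S` be a class of arrows closed under composition, stable under pullbacks, containing
the identities, with the left cancellation property and satisfying condition (Sub).  If
`X` is S-proper and `N(g)` is S-global, then the snail sequence of `g` is S-exact at
`π₀(N(g))`, i.e. the pair `(δ = Δ ≫ η_{N(g)}, π₀(n_g))` is S-exact. -/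
theorem snail_sequence_S_exact_at_pi0_Ng
    {B : Type u} [Category.{v} B] [HasPullbacks B] (Θ : NullStruct B)
    (hRI : Θ.ReducedInterchange) (ζ : Θ.StrongZero)
    (hK : ∀ (X Y : B) (g : X ⟶ Y), ∃ (N : B) (n : N ⟶ X) (ν : Θ.H N Y), Θ.IsStrongKer g n ν)
    (hC : ∀ (Y : B), ∃ (Q : B) (c : ζ.Z ⟶ Q) (γ : Θ.H Y Q),
        Θ.IsStrongCoker (ζ.isZero.from_ Y) c γ)
    -- the class `S` of arrows
    (S : ∀ ⦃X Y : B⦄, (X ⟶ Y) → Prop)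
    (hS_comp : ∀ {X Y Z : B} (u : X ⟶ Y) (v : Y ⟶ Z), S u → S v → S (u ≫ v))
    (hS_pb : ∀ {P X Y Z : B} (fst : P ⟶ X) (snd : P ⟶ Y) (u : X ⟶ Z) (v : Y ⟶ Z),
        IsPullback fst snd u v → S v → S fst)
    (hS_id : ∀ X : B, S (𝟙 X))
    (hS_cancel : ∀ {X Y Z : B} (u : X ⟶ Y) (v : Y ⟶ Z), S (u ≫ v) → S v)
    (hS_sub : CondSub ζ S)
    -- the arrow `g` and its strong Θ-kernel
    {X Y : B} (g : X ⟶ Y)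
    {Ng : B} (ng : Ng ⟶ X) (νg : Θ.H Ng Y) (hg : Θ.IsStrongKer g ng νg)
    -- strong Θ-kernels of the initial arrows of `N(g)`, `X`, `Y`
    {KN : B} (kN : KN ⟶ ζ.Z) (νN : Θ.H KN Ng) (hkN : Θ.IsStrongKer (ζ.isZero.to_ Ng) kN νN)
    {KX : B} (kX : KX ⟶ ζ.Z) (νX : Θ.H KX X) (hkX : Θ.IsStrongKer (ζ.isZero.to_ X) kX νX)
    {KY : B} (kY : KY ⟶ ζ.Z) (νY : Θ.H KY Y) (hkY : Θ.IsStrongKer (ζ.isZero.to_ Y) kY νY)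
    -- `π₀`-data of `N(g)`, `X`, `Y`
    {CN : B} (cN : ζ.Z ⟶ CN) (γN : Θ.H Ng CN)
    (hcN : Θ.IsStrongCoker (ζ.isZero.from_ Ng) cN γN)
    {PN : B} (pN : PN ⟶ ζ.Z) (μN : Θ.H PN CN) (hpN : Θ.IsStrongKer cN pN μN)
    (ηN : Ng ⟶ PN) (hηN : Θ.act ηN μN (𝟙 CN) = γN)
    {CX : B} (cX : ζ.Z ⟶ CX) (γX : Θ.H X CX)
    (hcX : Θ.IsStrongCoker (ζ.isZero.from_ X) cX γX)
    {PX : B} (pX : PX ⟶ ζ.Z) (μX : Θ.H PX CX) (hpX : Θ.IsStrongKer cX pX μX)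
    (ηX : X ⟶ PX) (hηX : Θ.act ηX μX (𝟙 CX) = γX)
    {CY : B} (cY : ζ.Z ⟶ CY) (γY : Θ.H Y CY)
    (hcY : Θ.IsStrongCoker (ζ.isZero.from_ Y) cY γY)
    {PY : B} (pY : PY ⟶ ζ.Z) (μY : Θ.H PY CY) (hpY : Θ.IsStrongKer cY pY μY)
    (ηY : Y ⟶ PY) (hηY : Θ.act ηY μY (𝟙 CY) = γY)
    -- the arrows of the snail sequence
    (nng : KN ⟶ KX) (hnng₀ : nng ≫ kX = kN)
    (hnng : Θ.act nng νX (𝟙 X) = Θ.act (𝟙 KN) νN ng)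
    (nmg : KX ⟶ KY) (hnmg₀ : nmg ≫ kY = kX)
    (hnmg : Θ.act nmg νY (𝟙 Y) = Θ.act (𝟙 KX) νX g)
    (Δ : KY ⟶ Ng) (hΔ₀ : Δ ≫ ng = ζ.zero KY X) (hΔ : Θ.act Δ νg (𝟙 Y) = νY)
    (cng : CN ⟶ CX) (hcng₀ : cN ≫ cng = cX)
    (hcng : Θ.act (𝟙 Ng) γN cng = Θ.act ng γX (𝟙 CX))
    (png : PN ⟶ PX) (hpng₀ : png ≫ pX = pN)
    (hpng : Θ.act png μX (𝟙 CX) = Θ.act (𝟙 PN) μN cng)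
    (cg : CX ⟶ CY) (hcg₀ : cX ≫ cg = cY)
    (hcg : Θ.act (𝟙 X) γX cg = Θ.act g γY (𝟙 CY))
    (pg : PX ⟶ PY) (hpg₀ : pg ≫ pY = pX)
    (hpg : Θ.act pg μY (𝟙 CY) = Θ.act (𝟙 PX) μX cg)
    -- `X` is S-proper, `N(g)` is S-global
    (hX_proper : SProper Θ S ηX) (hNg_global : S ηN) :
    SExact Θ S (Δ ≫ ηN) (ζ.star KY PX) png :=
  snail_sequence_S_exact_at_pi0_Ng_general Θ hRI ζ hK S hS_comp hS_id hS_cancel hS_sub g ng νg hg kY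
    νY hkY cN γN pN μN hpN ηN hηN cX γX pX μX hpX ηX hηX Δ hΔ₀ hΔ cng hcng png hpng hX_proper
    hNg_global
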